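/- Assume Assumption 1 holds, suppose ⟨C, Ψ_l⟩_𝒮 ≠ 0 for infinitely many l, and let (n(j))_{j≥1} and (k(j))_{j≥1} be increasing sequences of positive integers such that ‖C − P_{k(j)}(C)‖_𝒮 > 2δ_{n(j)} for all sufficiently large j. Then with probability 1, for all sufficiently large j one has ι(Ĉ_{n(j)}, δ_{n(j)}) > k(j). -/

import Mathlib

/-!
The truncation residual `S ↦ ‖S - P_m S‖` is antitone in `m` (Pythagoras) and `1`-Lipschitz in `S`.
Hence if `‖Ĉ - C‖ < R < δ` and some `m ≤ k` had `‖Ĉ - P_m Ĉ‖ < δ`, then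
`‖C - P_k C‖ ≤ ‖C - P_m C‖ ≤ ‖Ĉ - P_m Ĉ‖ + ‖Ĉ - C‖ < δ + R < 2δ`, contradicting the separation.
Almost surely `Ĉ_{n(j)}` is eventually `R(n(j))`-close to `C`, so this applies for all large `j`.
-/

open MeasureTheory Filter
open scoped RealInnerProductSpace

variable {𝒮 : Type*} [NormedAddCommGroup 𝒮] [InnerProductSpace ℝ 𝒮]

/-- `P_j(S) = ∑_{l=1}^{j} ⟨S, Ψ_l⟩ Ψ_l`, the orthogonal projection of `S` onto
`W_j = span {Ψ_1, …, Ψ_j}` (indices `0, …, j-1` in `0`-indexed notation). -/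
noncomputable def basisProj (Ψ : HilbertBasis ℕ ℝ 𝒮) (j : ℕ) (S : 𝒮) : 𝒮 :=
  ∑ l ∈ Finset.range j, ⟪S, Ψ l⟫ • Ψ l

/-- `W_j = span {Ψ_1, …, Ψ_j}` (i.e. the span of `Ψ 0, …, Ψ (j-1)`). -/
def basisSpan (Ψ : HilbertBasis ℕ ℝ 𝒮) (j : ℕ) : Submodule ℝ 𝒮 :=
  Submodule.span ℝ ((fun l => Ψ l) '' Set.Iio j)

/-- `ι(S, δ) = min {j ≥ 1 : ‖S - P_j(S)‖_𝒮 < δ}`. -/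
noncomputable def iotaDim (Ψ : HilbertBasis ℕ ℝ 𝒮) (S : 𝒮) (δ : ℝ) : ℕ :=
  sInf {j | 1 ≤ j ∧ ‖S - basisProj Ψ j S‖ < δ}

section

variable (Ψ : HilbertBasis ℕ ℝ 𝒮)

theorem basisProj_zero (S : 𝒮) : basisProj Ψ 0 S = 0 := by
  simp [basisProj]

theorem basisProj_sub (j : ℕ) (A B : 𝒮) :
    basisProj Ψ j (A - B) = basisProj Ψ j A - basisProj Ψ j B := by
  simp [basisProj, inner_sub_left, sub_smul, Finset.sum_sub_distrib]

theorem inner_sub_basisProj_basis_of_lt {j l : ℕ} (hl : l < j) (S : 𝒮) :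
    ⟪S - basisProj Ψ j S, Ψ l⟫ = 0 := by
  rw [inner_sub_left, basisProj,
    Ψ.orthonormal.inner_left_sum _ (Finset.mem_range.mpr hl)]
  simp

theorem inner_sub_basisProj_basisProj_of_le {j m : ℕ} (h : j ≤ m) (S S' : 𝒮) :
    ⟪S - basisProj Ψ m S, basisProj Ψ j S'⟫ = 0 := by
  change ⟪_, ∑ l ∈ Finset.range j, ⟪S', Ψ l⟫ • Ψ l⟫ = 0
  rw [inner_sum]
  refine Finset.sum_eq_zero fun l hl => ?_
  rw [real_inner_smul_right,
    inner_sub_basisProj_basis_of_lt Ψ ((Finset.mem_range.mp hl).trans_le h), mul_zero]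

theorem antitone_norm_sub_basisProj (S : 𝒮) : Antitone fun m => ‖S - basisProj Ψ m S‖ := by
  intro m k hmk
  have horth : ⟪S - basisProj Ψ k S, basisProj Ψ k S - basisProj Ψ m S⟫ = 0 := by
    rw [inner_sub_right, inner_sub_basisProj_basisProj_of_le Ψ le_rfl,
      inner_sub_basisProj_basisProj_of_le Ψ hmk, sub_zero]
  have hpyth := norm_add_sq_eq_norm_sq_add_norm_sq_real horth
  rw [sub_add_sub_cancel] at hpyth
  refine nonneg_le_nonneg_of_sq_le_sq (norm_nonneg _) ?_
  rw [hpyth]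
  exact le_add_of_nonneg_right (mul_self_nonneg _)

theorem norm_sub_basisProj_le_norm (j : ℕ) (S : 𝒮) : ‖S - basisProj Ψ j S‖ ≤ ‖S‖ := by
  simpa [basisProj_zero] using antitone_norm_sub_basisProj Ψ S (Nat.zero_le j)

theorem norm_sub_basisProj_le_add (j : ℕ) (S C : 𝒮) :
    ‖C - basisProj Ψ j C‖ ≤ ‖S - basisProj Ψ j S‖ + ‖C - S‖ :=
  calc ‖C - basisProj Ψ j C‖
      = ‖(S - basisProj Ψ j S) + ((C - S) - basisProj Ψ j (C - S))‖ := by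
        rw [basisProj_sub]; abel_nf
    _ ≤ ‖S - basisProj Ψ j S‖ + ‖(C - S) - basisProj Ψ j (C - S)‖ := norm_add_le _ _
    _ ≤ ‖S - basisProj Ψ j S‖ + ‖C - S‖ := by gcongr; exact norm_sub_basisProj_le_norm Ψ j _

theorem tendsto_basisProj (S : 𝒮) : Tendsto (fun j => basisProj Ψ j S) atTop (nhds S) := by
  have hsum : HasSum (fun l => ⟪S, Ψ l⟫ • Ψ l) S := by
    simpa only [Ψ.repr_apply_apply, real_inner_comm] using Ψ.hasSum_repr S
  exact hsum.tendsto_sum_nat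

theorem norm_sub_basisProj_iotaDim_lt (S : 𝒮) {δ : ℝ} (hδ : 0 < δ) :
    ‖S - basisProj Ψ (iotaDim Ψ S δ) S‖ < δ := by
  have hclose : ∀ᶠ j in atTop, ‖basisProj Ψ j S - S‖ < δ :=
    (tendsto_iff_norm_sub_tendsto_zero.mp (tendsto_basisProj Ψ S)).eventually (gt_mem_nhds hδ)
  obtain ⟨j, hj1, hj⟩ := ((eventually_ge_atTop 1).and hclose).exists
  exact (Nat.sInf_mem (s := {j | 1 ≤ j ∧ ‖S - basisProj Ψ j S‖ < δ})
    ⟨j, hj1, by rwa [norm_sub_rev]⟩).2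

theorem lt_iotaDim_of_add_le {S C : 𝒮} {δ : ℝ} {k : ℕ} (hδ : 0 < δ)
    (hsep : ‖S - C‖ + δ ≤ ‖C - basisProj Ψ k C‖) : k < iotaDim Ψ S δ := by
  by_contra! hle
  have hS := norm_sub_basisProj_iotaDim_lt Ψ S hδ
  have hmono := antitone_norm_sub_basisProj Ψ C hle
  have hlip := norm_sub_basisProj_le_add Ψ (iotaDim Ψ S δ) S C
  rw [norm_sub_rev C S] at hlip
  linarith

end

theorem infinite_expansion_detection_along_subsequence_general
    {𝒮 : Type*} [NormedAddCommGroup 𝒮] [InnerProductSpace ℝ 𝒮]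
    {Ω : Type*} [MeasurableSpace Ω] (ℙ : Measure Ω)
    (Ψ : HilbertBasis ℕ ℝ 𝒮)
    (Chat : ℕ → Ω → 𝒮)
    (C : 𝒮)
    (R : ℕ → ℝ)
    (hrate : ∀ᵐ ω ∂ℙ, ∀ᶠ n in atTop, ‖Chat n ω - C‖ < R n)
    (ε : ℝ) (hε : 0 < ε) (δ : ℕ → ℝ) (hδ : ∀ n, δ n = (1 + ε) * R n)
    (n k : ℕ → ℕ) (hn : StrictMono n)
    (hsep : ∀ᶠ j in atTop, 2 * δ (n j) < ‖C - basisProj Ψ (k j) C‖) :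
    ∀ᵐ ω ∂ℙ, ∀ᶠ j in atTop, k j < iotaDim Ψ (Chat (n j) ω) (δ (n j)) := by
  filter_upwards [hrate] with ω hω
  filter_upwards [hn.tendsto_atTop.eventually hω, hsep] with j hclose hsepj
  have hR : 0 < R (n j) := (norm_nonneg _).trans_lt hclose
  refine lt_iotaDim_of_add_le Ψ (C := C) (by rw [hδ]; positivity) ?_
  rw [hδ] at hsepj ⊢
  nlinarith [mul_pos hε hR]

/-- Under Assumption 1, if `⟨C, Ψ_l⟩ ≠ 0` for infinitely many `l` and the
update times `n(j)` and thresholds `k(j)` satisfy `‖C - P_{k(j)}(C)‖ > 2 δ_{n(j)}` for all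
sufficiently large `j`, then almost surely `ι(Ĉ_{n(j)}, δ_{n(j)}) > k(j)` for all sufficiently
large `j`. -/
theorem infinite_expansion_detection_along_subsequence
    {𝒮 : Type*} [NormedAddCommGroup 𝒮] [InnerProductSpace ℝ 𝒮]
    {Ω : Type*} [MeasurableSpace Ω] (ℙ : Measure Ω) [IsProbabilityMeasure ℙ]
    [MeasurableSpace 𝒮] [BorelSpace 𝒮]
    (Ψ : HilbertBasis ℕ ℝ 𝒮)
    (Chat : ℕ → Ω → 𝒮) (hChat : ∀ n, Measurable (Chat n))
    (C : 𝒮)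
    (R : ℕ → ℝ) (hRpos : ∀ n, 0 < R n) (hRanti : StrictAnti R)
    (hRlim : Tendsto R atTop (nhds 0))
    (hrate : ∀ᵐ ω ∂ℙ, ∀ᶠ n in atTop, ‖Chat n ω - C‖ < R n)
    (ε : ℝ) (hε : 0 < ε) (δ : ℕ → ℝ) (hδ : ∀ n, δ n = (1 + ε) * R n)
    (hinf : {l : ℕ | ⟪C, Ψ l⟫ ≠ 0}.Infinite)
    (n k : ℕ → ℕ) (hn : StrictMono n) (hk : StrictMono k)
    (hn1 : ∀ j, 1 ≤ n j) (hk1 : ∀ j, 1 ≤ k j)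
    (hsep : ∀ᶠ j in atTop, 2 * δ (n j) < ‖C - basisProj Ψ (k j) C‖) :
    ∀ᵐ ω ∂ℙ, ∀ᶠ j in atTop, k j < iotaDim Ψ (Chat (n j) ω) (δ (n j)) :=
  infinite_expansion_detection_along_subsequence_general ℙ Ψ Chat C R hrate ε hε δ hδ n k hn hsep
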